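/- The identity R2R_{n+1} ∘ sh_a - sh_a ∘ R2R_n = sh_a + Σ_{b=1}^{n} Θ_{b,a} ∘ sh_b holds as operators from words of length n to words of length n+1. -/

import Mathlib

/-!
Removing a letter and reinserting it anywhere is `R2R = ∑_b sh_b ∘ ∂_b`. Three commutation
rules, each proved by induction on the word one prepended letter at a time, then do the work:
`sh_a sh_b = sh_b sh_a`, `Θ_{b,a} sh_b = sh_b Θ_{b,a} + sh_a`, and on a word `w`,
`∂_b sh_a = sh_a ∂_b + Θ_{b,a} + δ_{ab} (|w| + 1)`. The first and third give
`R2R sh_a - sh_a R2R = (|w| + 1) sh_a + ∑_b sh_b Θ_{b,a}`, and summing the second over the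
alphabet turns `∑_b sh_b Θ_{b,a}` into `∑_b Θ_{b,a} sh_b - |A| sh_a`, after which
`|A| = |w|` leaves exactly one `sh_a`.
-/

open Finsupp

variable {A : Type} [DecidableEq A]

/-- The formal sum of `Finsupp.single w 1` over a list of words. -/
noncomputable def wordSum (l : List (List A)) : List A →₀ ℂ :=
  (l.map fun w => Finsupp.single w (1 : ℂ)).sum

/-- All words obtained from `w` by inserting the letter `a` at one position. -/
def insertions (a : A) : List A → List (List A)
  | [] => [[a]]
  | b :: t => (a :: b :: t) :: (insertions a t).map (b :: ·)

/-- All words obtained from `w` by deleting one occurrence of the letter `a`. -/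
def deletions (a : A) : List A → List (List A)
  | [] => []
  | b :: t => (if b = a then [t] else []) ++ (deletions a t).map (b :: ·)

/-- All words obtained from `w` by replacing one occurrence of `b` by `a`. -/
def replacements (b a : A) : List A → List (List A)
  | [] => []
  | c :: t => (if c = b then [a :: t] else []) ++ (replacements b a t).map (c :: ·)

/-- The insertion operator `sh_a`. -/
noncomputable def shOp (a : A) : (List A →₀ ℂ) →ₗ[ℂ] (List A →₀ ℂ) :=
  Finsupp.linearCombination ℂ (fun w => wordSum (insertions a w))

/-- The deletion operator `∂_a`. -/
noncomputable def delOp (a : A) : (List A →₀ ℂ) →ₗ[ℂ] (List A →₀ ℂ) :=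
  Finsupp.linearCombination ℂ (fun w => wordSum (deletions a w))

/-- The replacement operator `Θ_{b,a}`. -/
noncomputable def repOp (b a : A) : (List A →₀ ℂ) →ₗ[ℂ] (List A →₀ ℂ) :=
  Finsupp.linearCombination ℂ (fun w => wordSum (replacements b a w))

/-- Remove the letter at position `i` of `w` and reinsert it at position `j` (0-based). -/
def moveCard (w : List A) (i j : ℕ) : List A :=
  match w[i]? with
  | Option.none => w
  | Option.some c => (w.eraseIdx i).insertIdx j c

/-- The random-to-random operator applied to a single word: the sum over all ordered
pairs of positions `(i, j)` of removing the letter at position `i` and reinserting it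
at position `j` (the diagonal `i = j` contributes `w.length • w`). -/
noncomputable def r2rWord (w : List A) : List A →₀ ℂ :=
  ∑ i ∈ Finset.range w.length, ∑ j ∈ Finset.range w.length,
    Finsupp.single (moveCard w i j) (1 : ℂ)

/-- The (unnormalized) random-to-random operator `R2R`. -/
noncomputable def r2rOp : (List A →₀ ℂ) →ₗ[ℂ] (List A →₀ ℂ) :=
  Finsupp.linearCombination ℂ r2rWord

/-- Random-to-top on a single word: move the letter at each position to the end. -/
noncomputable def r2tWord (w : List A) : List A →₀ ℂ :=
  ∑ i ∈ Finset.range w.length, Finsupp.single (moveCard w i (w.length - 1)) (1 : ℂ)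

/-- The (unnormalized) random-to-top operator `R2T`. -/
noncomputable def r2tOp : (List A →₀ ℂ) →ₗ[ℂ] (List A →₀ ℂ) :=
  Finsupp.linearCombination ℂ r2tWord

/-- Top-to-random on a single word: move the last letter to each position. -/
noncomputable def t2rWord (w : List A) : List A →₀ ℂ :=
  ∑ j ∈ Finset.range w.length, Finsupp.single (moveCard w (w.length - 1) j) (1 : ℂ)

/-- The (unnormalized) top-to-random operator `T2R`. -/
noncomputable def t2rOp : (List A →₀ ℂ) →ₗ[ℂ] (List A →₀ ℂ) :=
  Finsupp.linearCombination ℂ t2rWord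

section

omit [DecidableEq A]

noncomputable def consOp (c : A) : (List A →₀ ℂ) →ₗ[ℂ] (List A →₀ ℂ) :=
  lmapDomain ℂ ℂ (c :: ·)

theorem consOp_single (c : A) (u : List A) (r : ℂ) :
    consOp c (single u r) = single (c :: u) r := by
  simp [consOp, mapDomain_single]

theorem linearMap_ext_single {f g : (List A →₀ ℂ) →ₗ[ℂ] (List A →₀ ℂ)}
    (h : ∀ w, f (single w 1) = g (single w 1)) : f = g :=
  lhom_ext' fun w => LinearMap.ext_ring (h w)

theorem wordSum_cons (u : List A) (l : List (List A)) :
    wordSum (u :: l) = single u 1 + wordSum l := by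
  simp [wordSum]

theorem wordSum_append (l₁ l₂ : List (List A)) :
    wordSum (l₁ ++ l₂) = wordSum l₁ + wordSum l₂ := by
  simp [wordSum]

theorem wordSum_map_cons (c : A) (l : List (List A)) :
    wordSum (l.map (c :: ·)) = consOp c (wordSum l) := by
  simp [wordSum, map_list_sum, consOp_single, Function.comp_def]

theorem wordSum_map_range (f : ℕ → List A) (k : ℕ) :
    wordSum ((List.range k).map f) = ∑ j ∈ Finset.range k, single (f j) (1 : ℂ) := by
  rw [wordSum, Finset.sum_eq_multiset_sum, Finset.range_val, ← Multiset.coe_range,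
    Multiset.map_coe, Multiset.sum_coe, List.map_map]
  rfl

theorem insertions_eq_map_insertIdx (a : A) (u : List A) :
    insertions a u = (List.range (u.length + 1)).map (u.insertIdx · a) := by
  induction u with
  | nil => simp [insertions]
  | cons b t ih =>
    rw [insertions, ih, List.length_cons, List.range_succ_eq_map (n := t.length + 1)]
    simp [Function.comp_def, List.insertIdx_succ_cons]

theorem shOp_single (a : A) (w : List A) :
    shOp a (single w 1) = wordSum (insertions a w) := by
  simp [shOp, linearCombination_single]

theorem shOp_single_nil (a : A) : shOp a (single [] 1) = consOp a (single [] 1) := by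
  simp [shOp_single, insertions, wordSum, consOp_single]

theorem shOp_consOp (a c : A) (x : List A →₀ ℂ) :
    shOp a (consOp c x) = consOp a (consOp c x) + consOp c (shOp a x) := by
  suffices h : (shOp a).comp (consOp c) =
      (consOp a).comp (consOp c) + (consOp c).comp (shOp a) from LinearMap.congr_fun h x
  refine linearMap_ext_single fun w => ?_
  simp [consOp_single, shOp_single, insertions, wordSum_cons, wordSum_map_cons]

theorem shOp_comm (a b : A) (x : List A →₀ ℂ) : shOp a (shOp b x) = shOp b (shOp a x) := by
  suffices h : (shOp a).comp (shOp b) = (shOp b).comp (shOp a) from LinearMap.congr_fun h x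
  refine linearMap_ext_single fun w => ?_
  simp only [LinearMap.comp_apply]
  induction w with
  | nil =>
    simp only [shOp_single_nil, shOp_consOp]
    abel
  | cons c t ih =>
    simp only [← consOp_single, shOp_consOp, map_add, ih]
    abel

theorem r2rOp_single (w : List A) :
    r2rOp (single w 1) = ∑ i : Fin w.length, wordSum (insertions w[i] (w.eraseIdx i)) := by
  rw [r2rOp, linearCombination_single, one_smul, r2rWord, Finset.sum_range]
  refine Finset.sum_congr rfl fun i _ => ?_
  rw [insertions_eq_map_insertIdx, wordSum_map_range, List.length_eraseIdx_add_one i.isLt]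
  simp [moveCard]

end

theorem delOp_single (b : A) (w : List A) :
    delOp b (single w 1) = wordSum (deletions b w) := by
  simp [delOp, linearCombination_single]

theorem repOp_single (b a : A) (w : List A) :
    repOp b a (single w 1) = wordSum (replacements b a w) := by
  simp [repOp, linearCombination_single]

theorem delOp_single_nil (b : A) : delOp b (single [] 1) = 0 := by
  simp [delOp_single, deletions, wordSum]

theorem repOp_single_nil (b a : A) : repOp b a (single [] 1) = 0 := by
  simp [repOp_single, replacements, wordSum]

theorem delOp_consOp (b c : A) (x : List A →₀ ℂ) :
    delOp b (consOp c x) = (if c = b then x else 0) + consOp c (delOp b x) := by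
  suffices h : (delOp b).comp (consOp c) =
      (if c = b then LinearMap.id else 0) + (consOp c).comp (delOp b) by
    have hx := LinearMap.congr_fun h x
    split_ifs at hx ⊢ <;> simpa using hx
  refine linearMap_ext_single fun w => ?_
  simp only [LinearMap.comp_apply, LinearMap.add_apply, consOp_single, delOp_single, deletions,
    wordSum_append, wordSum_map_cons]
  split_ifs <;> simp [wordSum]

theorem repOp_consOp (b a c : A) (x : List A →₀ ℂ) :
    repOp b a (consOp c x) = (if c = b then consOp a x else 0) + consOp c (repOp b a x) := by
  suffices h : (repOp b a).comp (consOp c) =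
      (if c = b then consOp a else 0) + (consOp c).comp (repOp b a) by
    have hx := LinearMap.congr_fun h x
    split_ifs at hx ⊢ <;> simpa using hx
  refine linearMap_ext_single fun w => ?_
  simp only [LinearMap.comp_apply, LinearMap.add_apply, consOp_single, repOp_single, replacements,
    wordSum_append, wordSum_map_cons]
  split_ifs <;> simp [wordSum, consOp_single]

theorem repOp_shOp_self (b a : A) (x : List A →₀ ℂ) :
    repOp b a (shOp b x) = shOp a x + shOp b (repOp b a x) := by
  suffices h : (repOp b a).comp (shOp b) = shOp a + (shOp b).comp (repOp b a) from
    LinearMap.congr_fun h x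
  refine linearMap_ext_single fun w => ?_
  simp only [LinearMap.comp_apply, LinearMap.add_apply]
  induction w with
  | nil => simp [shOp_single_nil, repOp_consOp, repOp_single_nil]
  | cons c t ih =>
    simp only [← consOp_single, shOp_consOp, repOp_consOp, map_add, ih]
    split_ifs <;> simp only [shOp_consOp, map_zero] <;> abel

/-- Deleting the inserted `a` itself gives `w` back once for each of the `w.length + 1`
insertion positions. -/
theorem delOp_shOp_single (b a : A) (w : List A) :
    delOp b (shOp a (single w 1)) = shOp a (delOp b (single w 1)) + repOp b a (single w 1)
      + if b = a then (w.length + 1) • single w 1 else 0 := by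
  induction w with
  | nil =>
    simp only [shOp_single_nil, delOp_consOp, delOp_single_nil, repOp_single_nil]
    split_ifs <;> simp_all
  | cons c t ih =>
    obtain rfl | hba := eq_or_ne b a
    · simp only [← consOp_single, shOp_consOp, delOp_consOp, repOp_consOp, map_add, ih]
      split_ifs <;> simp only [map_zero, map_nsmul, List.length_cons] <;> module
    · simp only [← consOp_single, shOp_consOp, delOp_consOp, repOp_consOp, map_add, ih,
        if_neg hba, if_neg hba.symm]
      split_ifs <;> simp only [map_zero] <;> abel

theorem sum_map_deletions {M : Type*} [AddCommMonoid M] [Fintype A] (f : A → List A → M)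
    (w : List A) :
    ∑ b, ((deletions b w).map (f b)).sum = ∑ i : Fin w.length, f w[i] (w.eraseIdx i) := by
  induction w generalizing f with
  | nil => simp [deletions]
  | cons c t ih =>
    calc ∑ b, ((deletions b (c :: t)).map (f b)).sum
        = f c t + ∑ b, ((deletions b t).map (fun u => f b (c :: u))).sum := by
          simp only [deletions, List.map_append, List.sum_append, List.map_map,
            Finset.sum_add_distrib, Function.comp_def]
          congr 1
          simp [apply_ite]
      _ = f c t + ∑ i : Fin t.length, f t[i] (c :: t.eraseIdx i) := by rw [ih]
      _ = ∑ i : Fin (c :: t).length, f (c :: t)[i] ((c :: t).eraseIdx i) :=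
          (Fin.sum_univ_succ fun i : Fin (t.length + 1) => f (c :: t)[i] ((c :: t).eraseIdx i)).symm

theorem r2rOp_eq_sum_shOp_delOp [Fintype A] (x : List A →₀ ℂ) :
    r2rOp x = ∑ b, shOp b (delOp b x) := by
  suffices h : (r2rOp : (List A →₀ ℂ) →ₗ[ℂ] _) = ∑ b, (shOp b).comp (delOp b) by
    simp [h, LinearMap.sum_apply]
  refine linearMap_ext_single fun w => ?_
  simp only [LinearMap.sum_apply, LinearMap.comp_apply, delOp_single, wordSum, map_list_sum,
    List.map_map, Function.comp_def, shOp_single, r2rOp_single]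
  exact (sum_map_deletions (fun b u => wordSum (insertions b u)) w).symm

theorem r2rOp_shOp_sub_shOp_r2rOp [Fintype A] (a : A) (w : List A) :
    r2rOp (shOp a (single w 1)) - shOp a (r2rOp (single w 1)) =
      (w.length + 1) • shOp a (single w 1) + ∑ b, shOp b (repOp b a (single w 1)) := by
  simp only [r2rOp_eq_sum_shOp_delOp, delOp_shOp_single, map_add, map_sum, shOp_comm a,
    apply_ite (shOp _), map_nsmul, map_zero, Finset.sum_add_distrib, Finset.sum_ite_eq',
    Finset.mem_univ, if_true]
  abel

/-- **Theorem 38, Equation (17).** For words of length `n` over an alphabet of `n`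
letters, `R2R_{n+1} ∘ sh_a - sh_a ∘ R2R_n = sh_a + ∑_b Θ_{b,a} ∘ sh_b`. -/
theorem r2r_sh_commutator_eq' (n : ℕ) [Fintype A] (hcard : Fintype.card A = n)
    (a : A) (w : List A) (hw : w.length = n) :
    r2rOp (shOp a (Finsupp.single w (1 : ℂ))) -
      shOp a (r2rOp (Finsupp.single w (1 : ℂ))) =
    shOp a (Finsupp.single w (1 : ℂ)) +
      ∑ b : A, repOp b a (shOp b (Finsupp.single w (1 : ℂ))) := by
  simp only [r2rOp_shOp_sub_shOp_r2rOp, repOp_shOp_self, Finset.sum_add_distrib, Finset.sum_const,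
    Finset.card_univ, hcard, hw, succ_nsmul]
  abel
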